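/- Consider the three-level aggregation scheme: $T_{ik} = \sqrt{\sum_{z,h} x_{ikz} x_{ikh} \tau^{(ik)}_{zh}}$, $S_i = \sqrt{\sum_{k,l} T_{ik} T_{il} \sigma^{(i)}_{kl}}$, $B = \sqrt{\sum_{i,j} S_i S_j \rho_{ij}}$, with all $x_{ikz} \ge 0$, all intermediate aggregates positive, and all correlation matrices symmetric with unit diagonal. Define allocation ratios $AR^{(3)}_{ikz} = (\sum_h x_{ikh}\tau^{(ik)}_{zh})/T_{ik}$, $AR^{(2)}_{ik} = (\sum_l T_{il}\sigma^{(i)}_{kl})/S_i$, $AR^{(1)}_i = (\sum_j S_j \rho_{ij})/B$. Then $B = \sum_{i,k,z} x_{ikz} \cdot AR^{(3)}_{ikz} \cdot AR^{(2)}_{ik} \cdot AR^{(1)}_i$. -/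
import Mathlib


open Finset

theorem three_level_euler_allocation
    (n : ℕ) (m : Fin n → ℕ) (p : ∀ i, Fin (m i) → ℕ)
    (x : ∀ i, ∀ k : Fin (m i), Fin (p i k) → ℝ)
    (τ : ∀ i, ∀ k : Fin (m i), Fin (p i k) → Fin (p i k) → ℝ)
    (σ : ∀ i, Fin (m i) → Fin (m i) → ℝ)
    (ρ : Fin n → Fin n → ℝ)
    (hτsym : ∀ i k z h, τ i k z h = τ i k h z)
    (hτdiag : ∀ i k z, τ i k z z = 1)
    (hσsym : ∀ i k l, σ i k l = σ i l k)
    (hσdiag : ∀ i k, σ i k k = 1)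
    (hρsym : ∀ i j, ρ i j = ρ j i)
    (hρdiag : ∀ i, ρ i i = 1)
    (hx : ∀ i k z, 0 ≤ x i k z)
    (T : ∀ i, Fin (m i) → ℝ)
    (hTdef : ∀ i k, T i k = Real.sqrt (∑ z, ∑ h, x i k z * x i k h * τ i k z h))
    (hTpos : ∀ i k, 0 < T i k)
    (S : Fin n → ℝ)
    (hSdef : ∀ i, S i = Real.sqrt (∑ k, ∑ l, T i k * T i l * σ i k l))
    (hSpos : ∀ i, 0 < S i)
    (B : ℝ) (hBdef : B = Real.sqrt (∑ i, ∑ j, S i * S j * ρ i j))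
    (hB : 0 < B) :
    B = ∑ i, ∑ k, ∑ z, x i k z *
        ((∑ h, x i k h * τ i k z h) / T i k) *
        ((∑ l, T i l * σ i k l) / S i) *
        ((∑ j, S j * ρ i j) / B) := by
  have hT2 : ∀ i k, (∑ z, ∑ h, x i k z * x i k h * τ i k z h) = T i k ^ 2 := by
    intro i k
    have h1 := hTpos i k
    rw [hTdef i k] at h1
    rw [hTdef i k, Real.sq_sqrt (Real.sqrt_pos.mp h1).le]
  have hS2 : ∀ i, (∑ k, ∑ l, T i k * T i l * σ i k l) = S i ^ 2 := by
    intro i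
    have h1 := hSpos i
    rw [hSdef i] at h1
    rw [hSdef i, Real.sq_sqrt (Real.sqrt_pos.mp h1).le]
  have hB2 : (∑ i, ∑ j, S i * S j * ρ i j) = B ^ 2 := by
    have h1 := hB
    rw [hBdef] at h1
    rw [hBdef, Real.sq_sqrt (Real.sqrt_pos.mp h1).le]
  have key3 : ∀ i k, ∑ z, x i k z * ((∑ h, x i k h * τ i k z h) / T i k) = T i k := by
    intro i k
    have : ∑ z, x i k z * ((∑ h, x i k h * τ i k z h) / T i k)
        = (∑ z, ∑ h, x i k z * x i k h * τ i k z h) / T i k := by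
      rw [Finset.sum_div]
      refine Finset.sum_congr rfl fun z _ => ?_
      rw [mul_div_assoc']
      congr 1
      rw [Finset.mul_sum]
      exact Finset.sum_congr rfl fun h _ => by ring
    rw [this, hT2 i k, sq, mul_div_assoc, div_self (hTpos i k).ne', mul_one]
  have key2 : ∀ i, ∑ k, T i k * ((∑ l, T i l * σ i k l) / S i) = S i := by
    intro i
    have : ∑ k, T i k * ((∑ l, T i l * σ i k l) / S i)
        = (∑ k, ∑ l, T i k * T i l * σ i k l) / S i := by
      rw [Finset.sum_div]
      refine Finset.sum_congr rfl fun k _ => ?_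
      rw [mul_div_assoc']
      congr 1
      rw [Finset.mul_sum]
      exact Finset.sum_congr rfl fun l _ => by ring
    rw [this, hS2 i, sq, mul_div_assoc, div_self (hSpos i).ne', mul_one]
  have key1 : ∑ i, S i * ((∑ j, S j * ρ i j) / B) = B := by
    have : ∑ i, S i * ((∑ j, S j * ρ i j) / B)
        = (∑ i, ∑ j, S i * S j * ρ i j) / B := by
      rw [Finset.sum_div]
      refine Finset.sum_congr rfl fun i _ => ?_
      rw [mul_div_assoc']
      congr 1
      rw [Finset.mul_sum]
      exact Finset.sum_congr rfl fun j _ => by ring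
    rw [this, hB2, sq, mul_div_assoc, div_self hB.ne', mul_one]
  symm
  calc ∑ i, ∑ k, ∑ z, x i k z *
        ((∑ h, x i k h * τ i k z h) / T i k) *
        ((∑ l, T i l * σ i k l) / S i) *
        ((∑ j, S j * ρ i j) / B)
      = ∑ i, S i * ((∑ j, S j * ρ i j) / B) := by
        refine Finset.sum_congr rfl fun i _ => ?_
        have hk : ∀ k, (∑ z, x i k z *
            ((∑ h, x i k h * τ i k z h) / T i k) *
            ((∑ l, T i l * σ i k l) / S i) *
            ((∑ j, S j * ρ i j) / B))
            = T i k * ((∑ l, T i l * σ i k l) / S i) * ((∑ j, S j * ρ i j) / B) := by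
          intro k
          calc (∑ z, x i k z *
              ((∑ h, x i k h * τ i k z h) / T i k) *
              ((∑ l, T i l * σ i k l) / S i) *
              ((∑ j, S j * ρ i j) / B))
              = (∑ z, x i k z * ((∑ h, x i k h * τ i k z h) / T i k)) *
                ((∑ l, T i l * σ i k l) / S i) * ((∑ j, S j * ρ i j) / B) := by
                rw [Finset.sum_mul, Finset.sum_mul]
            _ = _ := by rw [key3 i k]
        rw [Finset.sum_congr rfl fun k _ => hk k, ← Finset.sum_mul, key2 i]
    _ = B := key1
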